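/- arXiv:2411.14344 — 2 statements merged into one kernel-verified Lean document; each statement's English description precedes it below -/
import Mathlib

section
/- Let 0 ≤ p < q, a ∈ ℝ^q, and i ∈ [q] with a_i ≠ 0. In the Koszul matrix A(a) (rows indexed by p-subsets S of [q], columns indexed by (p+1)-subsets U, entries A_{S,U} = σ(U,j)·a_j when U = S ∪ {j}, else 0), the columns indexed by {U : i ∈ U} form a basis of the column span of A(a), and the rows indexed by {S : i ∉ S} form a basis of the row span of A(a). -/
def koszulSign {q : ℕ} (U : Finset (Fin q)) (i : Fin q) : ℝ :=
  (-1) ^ (U.filter (fun m => m < i)).card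

def koszul (q p : ℕ) (a : Fin q → ℝ) :
    Matrix {S : Finset (Fin q) // S.card = p} {U : Finset (Fin q) // U.card = p + 1} ℝ :=
  fun S U => ∑ i : Fin q,
    if (U : Finset (Fin q)) = insert i (S : Finset (Fin q)) ∧ i ∉ (S : Finset (Fin q))
    then koszulSign (U : Finset (Fin q)) i * a i else 0

/-!
The argument rests on `A(a) * A'(a) = 0`, where `A'(a)` is the next Koszul matrix: in the double
sum over chains `S ⊂ S ∪ {j} ⊂ S ∪ {j, k}`, exchanging `j` and `k` flips the sign.

If `i ∉ U`, column `W = U ∪ {i}` of `A'(a)` gives a linear relation among the columns of `A(a)`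
in which column `U` has coefficient `±a_i ≠ 0` and every other column involved contains `i`.
Dually, if `i ∈ S`, row `S \ {i}` of the previous Koszul matrix gives a relation among the rows
in which row `S` has coefficient `±a_i` and every other row involved avoids `i`. Independence
holds because the square submatrix with rows `U \ {i}` (resp. columns `S ∪ {i}`) is diagonal
with entries `±a_i`.
-/

open Finset

section LinearAlgebra

variable {ι K M : Type*} [Field K] [AddCommGroup M] [Module K M]

theorem mem_span_of_sum_smul_eq_zero [Fintype ι] {v : ι → M} {c : ι → K} (P : ι → Prop)
    (hsum : ∑ j, c j • v j = 0) {j₀ : ι} (hc : c j₀ ≠ 0)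
    (hP : ∀ j ≠ j₀, c j ≠ 0 → P j) :
    v j₀ ∈ Submodule.span K (Set.range fun j : {j // P j} => v j) := by
  classical
  rw [← add_sum_erase _ _ (mem_univ j₀), add_eq_zero_iff_eq_neg'] at hsum
  have hv : v j₀ = -((c j₀)⁻¹ • ∑ j ∈ univ.erase j₀, c j • v j) := by
    rw [hsum, smul_neg, neg_neg, inv_smul_smul₀ hc]
  rw [hv]
  refine Submodule.neg_mem _ (Submodule.smul_mem _ _ (Submodule.sum_mem _ fun j hj => ?_))
  by_cases hcj : c j = 0
  · simp [hcj]
  · exact Submodule.smul_mem _ _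
      (Submodule.subset_span ⟨⟨j, hP j (ne_of_mem_erase hj) hcj⟩, rfl⟩)

theorem span_range_subtype_eq_of_forall_mem {v : ι → M} {P : ι → Prop}
    (h : ∀ j, v j ∈ Submodule.span K (Set.range fun j : {j // P j} => v j)) :
    Submodule.span K (Set.range fun j : {j // P j} => v j) = Submodule.span K (Set.range v) :=
  Submodule.span_eq_span (Set.range_subset_iff.2 fun j => Submodule.subset_span ⟨j.1, rfl⟩)
    (Set.range_subset_iff.2 h)

end LinearAlgebra

theorem linearIndependent_of_apply_eq_zero_of_ne {ι κ R : Type*} [Ring R] [NoZeroDivisors R]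
    {v : ι → κ → R} (f : ι → κ) (hdiag : ∀ j, v j (f j) ≠ 0)
    (hoff : ∀ j k, j ≠ k → v j (f k) = 0) : LinearIndependent R v := by
  classical
  rw [linearIndependent_iff']
  intro s g hg k hk
  have hk' := congrFun hg (f k)
  simp only [Finset.sum_apply, Pi.smul_apply, smul_eq_mul, Pi.zero_apply] at hk'
  rw [sum_eq_single_of_mem k hk fun j _ hjk => by rw [hoff j k hjk, mul_zero]] at hk'
  exact (mul_eq_zero.1 hk').resolve_right (hdiag k)

variable {q : ℕ}

theorem koszulSign_insert {S : Finset (Fin q)} {j : Fin q} (hj : j ∉ S) (k : Fin q) :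
    koszulSign (insert j S) k = (if j < k then -1 else 1) * koszulSign S k := by
  unfold koszulSign
  rw [filter_insert]
  split_ifs with h
  · rw [card_insert_of_notMem (fun hm => hj (mem_of_mem_filter _ hm)), pow_succ, mul_comm]
  · rw [one_mul]

theorem koszulSign_insert_self {S : Finset (Fin q)} {j : Fin q} (hj : j ∉ S) :
    koszulSign (insert j S) j = koszulSign S j := by
  rw [koszulSign_insert hj, if_neg (lt_irrefl j), one_mul]

theorem koszulSign_ne_zero (U : Finset (Fin q)) (i : Fin q) : koszulSign U i ≠ 0 :=
  pow_ne_zero _ (by norm_num)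

theorem koszulSign_insert_mul_koszulSign_antisymm {S W : Finset (Fin q)} {j k : Fin q}
    (hjk : j ≠ k) (hj : j ∉ S) (hk : k ∉ S) (hW : W = insert k (insert j S)) :
    koszulSign (insert j S) j * koszulSign W k =
      -(koszulSign (insert k S) k * koszulSign W j) := by
  have hkj : k ∉ insert j S := by simp [hk, hjk.symm]
  have hjk' : j ∉ insert k S := by simp [hj, hjk]
  subst hW
  rw [koszulSign_insert_self hkj, insert_comm, koszulSign_insert_self hjk',
    koszulSign_insert_self hj, koszulSign_insert_self hk, koszulSign_insert hj,
    koszulSign_insert hk]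
  rcases hjk.lt_or_gt with h | h
  · rw [if_pos h, if_neg h.not_gt]; ring
  · rw [if_neg h.not_gt, if_pos h]; ring

theorem koszul_mul_koszul_eq_zero (p : ℕ) (a : Fin q → ℝ) :
    koszul q p a * koszul q (p + 1) a = 0 := by
  ext S W
  -- `T j k` is the contribution of the chain `S ⊂ S ∪ {j} ⊂ S ∪ {j, k} = W`.
  set T : Fin q → Fin q → ℝ := fun j k =>
    if j ∉ S.1 ∧ k ∉ insert j S.1 ∧ W.1 = insert k (insert j S.1) then
      koszulSign (insert j S.1) j * a j * (koszulSign W.1 k * a k) else 0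
  have hexpand : (koszul q p a * koszul q (p + 1) a) S W = ∑ j, ∑ k, T j k := by
    simp only [Matrix.mul_apply, koszul, sum_mul_sum]
    rw [sum_comm]
    refine sum_congr rfl fun j _ => ?_
    rw [sum_comm]
    refine sum_congr rfl fun k _ => ?_
    by_cases hj : j ∈ S.1
    · simp [T, hj]
    have hcard : (insert j S.1).card = p + 1 := by rw [card_insert_of_notMem hj, S.2]
    rw [Fintype.sum_eq_single ⟨insert j S.1, hcard⟩ fun V hV => ?_]
    · simp [T, hj, and_comm]
    · rw [if_neg fun h => hV (Subtype.ext h.1), zero_mul]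
  have hswap : ∀ j k, j ∉ S.1 ∧ k ∉ insert j S.1 ∧ W.1 = insert k (insert j S.1) →
      k ∉ S.1 ∧ j ∉ insert k S.1 ∧ W.1 = insert j (insert k S.1) := by
    rintro j k ⟨hj, hk, hW⟩
    simp only [mem_insert, not_or] at hk ⊢
    exact ⟨hk.2, ⟨Ne.symm hk.1, hj⟩, hW.trans (insert_comm k j S.1)⟩
  have hantisymm : ∀ j k, T j k = -T k j := by
    intro j k
    by_cases hc : j ∉ S.1 ∧ k ∉ insert j S.1 ∧ W.1 = insert k (insert j S.1)
    · have hc' := hswap j k hc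
      obtain ⟨hj, hk, hW⟩ := id hc
      have hjk : j ≠ k := fun h => hk (h ▸ mem_insert_self j S.1)
      simp only [T, if_pos hc, if_pos hc']
      linear_combination (a j * a k) * koszulSign_insert_mul_koszulSign_antisymm hjk hj hc'.1 hW
    · simp only [T, if_neg hc, if_neg (mt (hswap k j) hc), neg_zero]
  have : ∑ j, ∑ k, T j k = -∑ j, ∑ k, T j k := by
    conv_lhs => rw [sum_comm]
    simp only [← sum_neg_distrib]
    exact sum_congr rfl fun j _ => sum_congr rfl fun k _ => hantisymm k j
  rw [hexpand, Matrix.zero_apply]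
  linarith

variable {p : ℕ} {a : Fin q → ℝ}

theorem koszul_apply_of_eq_insert {S : {S : Finset (Fin q) // S.card = p}}
    {U : {U : Finset (Fin q) // U.card = p + 1}} {j : Fin q} (hj : j ∉ S.1)
    (hU : U.1 = insert j S.1) : koszul q p a S U = koszulSign U.1 j * a j := by
  rw [koszul, Fintype.sum_eq_single j fun k hk => if_neg ?_, if_pos ⟨hU, hj⟩]
  rintro ⟨hkU, hkS⟩
  have : k ∈ insert j S.1 := hU ▸ hkU ▸ mem_insert_self k S.1
  exact hk ((mem_insert.1 this).resolve_right hkS)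

theorem exists_eq_insert_of_koszul_ne_zero {S : {S : Finset (Fin q) // S.card = p}}
    {U : {U : Finset (Fin q) // U.card = p + 1}} (h : koszul q p a S U ≠ 0) :
    ∃ j ∉ S.1, U.1 = insert j S.1 := by
  by_contra! hne
  exact h (sum_eq_zero fun j _ => if_neg fun hj => hne j hj.2 hj.1)

theorem eq_insert_of_koszul_ne_zero {S : {S : Finset (Fin q) // S.card = p}}
    {U : {U : Finset (Fin q) // U.card = p + 1}} {i : Fin q} (hiS : i ∉ S.1) (hiU : i ∈ U.1)
    (h : koszul q p a S U ≠ 0) : U.1 = insert i S.1 := by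
  obtain ⟨j, -, hU⟩ := exists_eq_insert_of_koszul_ne_zero h
  obtain rfl : i = j := (mem_insert.1 (hU ▸ hiU)).resolve_right hiS
  exact hU

theorem koszul_ne_zero_of_eq_insert {S : {S : Finset (Fin q) // S.card = p}}
    {U : {U : Finset (Fin q) // U.card = p + 1}} {i : Fin q} (hai : a i ≠ 0) (hiS : i ∉ S.1)
    (hU : U.1 = insert i S.1) : koszul q p a S U ≠ 0 := by
  rw [koszul_apply_of_eq_insert hiS hU]
  exact mul_ne_zero (koszulSign_ne_zero _ _) hai

theorem koszul_col_mem_span {i : Fin q} (hai : a i ≠ 0)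
    (U : {U : Finset (Fin q) // U.card = p + 1}) :
    (fun S => koszul q p a S U) ∈ Submodule.span ℝ (Set.range
      fun U' : {U' : {U' : Finset (Fin q) // U'.card = p + 1} // i ∈ U'.1.1} =>
        fun S => koszul q p a S U'.1) := by
  by_cases hiU : i ∈ U.1
  · exact Submodule.subset_span ⟨⟨U, hiU⟩, rfl⟩
  have hW : (insert i U.1).card = p + 1 + 1 := by rw [card_insert_of_notMem hiU, U.2]
  refine mem_span_of_sum_smul_eq_zero (c := fun V => koszul q (p + 1) a V ⟨_, hW⟩)
    (v := fun V S => koszul q p a S V) (fun V => i ∈ V.1) ?_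
    (koszul_ne_zero_of_eq_insert hai hiU rfl) ?_
  · funext S
    simpa [Matrix.mul_apply, mul_comm] using
      congrFun (congrFun (koszul_mul_koszul_eq_zero p a) S) ⟨_, hW⟩
  · intro V hVU hV
    by_contra hiV
    have h := eq_insert_of_koszul_ne_zero hiV (mem_insert_self i U.1) hV
    exact hVU (Subtype.ext (by rw [← erase_insert hiV, ← h, erase_insert hiU]))

theorem koszul_row_mem_span {i : Fin q} (hai : a i ≠ 0)
    (S : {S : Finset (Fin q) // S.card = p}) :
    koszul q p a S ∈ Submodule.span ℝ (Set.range
      fun S' : {S' : {S' : Finset (Fin q) // S'.card = p} // i ∉ S'.1.1} =>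
        koszul q p a S'.1) := by
  by_cases hiS : i ∉ S.1
  · exact Submodule.subset_span ⟨⟨S, hiS⟩, rfl⟩
  rw [not_not] at hiS
  cases p with
  | zero => simp [card_eq_zero.1 S.2] at hiS
  | succ r =>
    have hS' : (S.1.erase i).card = r := by rw [card_erase_of_mem hiS, S.2, Nat.add_sub_cancel]
    refine mem_span_of_sum_smul_eq_zero (c := koszul q r a ⟨_, hS'⟩) (v := koszul q (r + 1) a)
      (fun V => i ∉ V.1) ?_
      (koszul_ne_zero_of_eq_insert hai (notMem_erase i _) (insert_erase hiS).symm) ?_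
    · funext U
      simpa [Matrix.mul_apply] using
        congrFun (congrFun (koszul_mul_koszul_eq_zero r a) ⟨_, hS'⟩) U
    · intro V hVS hV hiV
      exact hVS (Subtype.ext
        ((eq_insert_of_koszul_ne_zero (notMem_erase i _) hiV hV).trans (insert_erase hiS)))

theorem linearIndependent_koszul_cols {i : Fin q} (hai : a i ≠ 0) :
    LinearIndependent ℝ (fun U : {U : {U : Finset (Fin q) // U.card = p + 1} // i ∈ U.1.1} =>
      fun S => koszul q p a S U.1) := by
  have hcard (U : {U : {U : Finset (Fin q) // U.card = p + 1} // i ∈ U.1.1}) :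
      (U.1.1.erase i).card = p := by rw [card_erase_of_mem U.2, U.1.2, Nat.add_sub_cancel]
  refine linearIndependent_of_apply_eq_zero_of_ne (fun U => ⟨U.1.1.erase i, hcard U⟩)
    (fun U => koszul_ne_zero_of_eq_insert hai (notMem_erase i _) (insert_erase U.2).symm) ?_
  intro U U' hUU'
  by_contra h
  exact hUU' (Subtype.ext (Subtype.ext
    ((eq_insert_of_koszul_ne_zero (notMem_erase i _) U.2 h).trans (insert_erase U'.2))))

theorem linearIndependent_koszul_rows {i : Fin q} (hai : a i ≠ 0) :
    LinearIndependent ℝ (fun S : {S : {S : Finset (Fin q) // S.card = p} // i ∉ S.1.1} =>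
      koszul q p a S.1) := by
  have hcard (S : {S : {S : Finset (Fin q) // S.card = p} // i ∉ S.1.1}) :
      (insert i S.1.1).card = p + 1 := by rw [card_insert_of_notMem S.2, S.1.2]
  refine linearIndependent_of_apply_eq_zero_of_ne (fun S => ⟨insert i S.1.1, hcard S⟩)
    (fun S => koszul_ne_zero_of_eq_insert hai S.2 rfl) ?_
  intro S S' hSS'
  by_contra h
  have h' := eq_insert_of_koszul_ne_zero S.2 (mem_insert_self i S'.1.1) h
  exact hSS' (Subtype.ext (Subtype.ext
    (by rw [← erase_insert S.2, ← h', erase_insert S'.2])))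

theorem stmt2_general (q p : ℕ) (a : Fin q → ℝ) (i : Fin q) (hai : a i ≠ 0) :
    -- the columns {U : i ∈ U} form a basis of the column span
    (LinearIndependent ℝ
        (fun U : {U : {U : Finset (Fin q) // U.card = p + 1} // i ∈ U.1.1} =>
          (fun S => koszul q p a S U.1)) ∧
      Submodule.span ℝ (Set.range
          (fun U : {U : {U : Finset (Fin q) // U.card = p + 1} // i ∈ U.1.1} =>
            (fun S => koszul q p a S U.1))) =
        Submodule.span ℝ (Set.range (fun U => fun S => koszul q p a S U))) ∧
    -- the rows {S : i ∉ S} form a basis of the row span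
    (LinearIndependent ℝ
        (fun S : {S : {S : Finset (Fin q) // S.card = p} // i ∉ S.1.1} =>
          koszul q p a S.1) ∧
      Submodule.span ℝ (Set.range
          (fun S : {S : {S : Finset (Fin q) // S.card = p} // i ∉ S.1.1} =>
            koszul q p a S.1)) =
        Submodule.span ℝ (Set.range (koszul q p a))) := by
  refine ⟨⟨linearIndependent_koszul_cols hai, ?_⟩, linearIndependent_koszul_rows hai, ?_⟩
  · exact span_range_subtype_eq_of_forall_mem (v := fun U S => koszul q p a S U)
      (P := fun U => i ∈ U.1) (koszul_col_mem_span hai)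
  · exact span_range_subtype_eq_of_forall_mem (v := koszul q p a) (P := fun S => i ∉ S.1)
      (koszul_row_mem_span hai)

theorem stmt2 (q p : ℕ) (hpq : p < q) (a : Fin q → ℝ) (i : Fin q) (hai : a i ≠ 0) :
    -- the columns {U : i ∈ U} form a basis of the column span
    (LinearIndependent ℝ
        (fun U : {U : {U : Finset (Fin q) // U.card = p + 1} // i ∈ U.1.1} =>
          (fun S => koszul q p a S U.1)) ∧
      Submodule.span ℝ (Set.range
          (fun U : {U : {U : Finset (Fin q) // U.card = p + 1} // i ∈ U.1.1} =>
            (fun S => koszul q p a S U.1))) =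
        Submodule.span ℝ (Set.range (fun U => fun S => koszul q p a S U))) ∧
    -- the rows {S : i ∉ S} form a basis of the row span
    (LinearIndependent ℝ
        (fun S : {S : {S : Finset (Fin q) // S.card = p} // i ∉ S.1.1} =>
          koszul q p a S.1) ∧
      Submodule.span ℝ (Set.range
          (fun S : {S : {S : Finset (Fin q) // S.card = p} // i ∉ S.1.1} =>
            koszul q p a S.1)) =
        Submodule.span ℝ (Set.range (koszul q p a))) :=
  stmt2_general q p a i hai
end

section
/- For every n ≥ 1 and every r with n ≤ r ≤ n² − n + 1, there exist r linearly independent rank-1 n×n real matrices whose sum is the identity matrix I_n. -/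
open Matrix

def Joff (n t : ℕ) : ℕ × ℕ :=
  (t / (n-1), if t % (n-1) < t / (n-1) then t % (n-1) else t % (n-1) + 1)

lemma Joff_facts {n t : ℕ} (h : t < n * (n-1)) :
    (Joff n t).1 < n ∧ (Joff n t).2 < n ∧ (Joff n t).1 ≠ (Joff n t).2 := by
  have hpos : 0 < n - 1 := by
    rcases Nat.eq_zero_or_pos (n-1) with h0 | h0
    · rw [h0, mul_zero] at h; omega
    · exact h0
  have hdiv : t / (n-1) < n := by
    rw [Nat.div_lt_iff_lt_mul hpos]; omega
  have hmod : t % (n-1) < n - 1 := Nat.mod_lt _ hpos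
  refine ⟨hdiv, ?_, ?_⟩ <;> dsimp only [Joff] <;> split_ifs <;> omega

lemma Joff_inj {n s t : ℕ} (hs : s < n * (n-1)) (_ht : t < n * (n-1))
    (h : Joff n s = Joff n t) : s = t := by
  have hpos : 0 < n - 1 := by
    rcases Nat.eq_zero_or_pos (n-1) with h0 | h0
    · rw [h0, mul_zero] at hs; omega
    · exact h0
  simp only [Joff, Prod.mk.injEq] at h
  obtain ⟨hq, hsnd⟩ := h
  have hm : s % (n-1) = t % (n-1) := by
    rw [hq] at hsnd; split_ifs at hsnd <;> omega
  calc s = (n-1) * (s/(n-1)) + s % (n-1) := (Nat.div_add_mod s (n-1)).symm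
    _ = (n-1) * (t/(n-1)) + t % (n-1) := by rw [hq, hm]
    _ = t := Nat.div_add_mod t (n-1)

lemma rank_vecMulVec_one {n : ℕ} {u v : Fin n → ℝ} (hu : u ≠ 0) (hv : v ≠ 0) :
    (Matrix.vecMulVec u v).rank = 1 := by
  have hmv : ∀ x, Matrix.vecMulVec u v *ᵥ x = (v ⬝ᵥ x) • u := by
    intro x
    ext i
    simp only [Matrix.mulVec, dotProduct, Matrix.vecMulVec_apply, Pi.smul_apply,
      smul_eq_mul, Finset.sum_mul, Finset.mul_sum]
    exact Finset.sum_congr rfl fun j _ => by ring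
  have hrange : LinearMap.range (Matrix.vecMulVec u v).mulVecLin = Submodule.span ℝ {u} := by
    apply le_antisymm
    · rintro _ ⟨x, rfl⟩
      rw [Matrix.mulVecLin_apply, hmv]
      exact Submodule.smul_mem _ _ (Submodule.mem_span_singleton_self u)
    · rw [Submodule.span_le, Set.singleton_subset_iff]
      obtain ⟨j, hj⟩ : ∃ j, v j ≠ 0 := by
        by_contra hc; push_neg at hc; exact hv (funext hc)
      refine ⟨Pi.single j (v j)⁻¹, ?_⟩
      rw [Matrix.mulVecLin_apply, hmv]
      have : v ⬝ᵥ Pi.single j (v j)⁻¹ = 1 := by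
        simp [dotProduct, Pi.single_apply, Finset.sum_ite_eq', mul_inv_cancel₀ hj]
      rw [this, one_smul]
  rw [Matrix.rank, hrange, finrank_span_singleton hu]

open Classical in
/-- The family of rank-one matrices. -/
noncomputable def Mfam (n r : ℕ) : Fin r → Matrix (Fin n) (Fin n) ℝ := fun ℓ =>
  if (ℓ : ℕ) < n then
    Matrix.vecMulVec (fun a => if (a : ℕ) = (ℓ : ℕ) then 1 else 0)
      (fun b => if ((b : ℕ) = (ℓ : ℕ) ∨ ∃ t, n + t < r ∧ Joff n t = ((ℓ : ℕ), (b : ℕ)))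
        then 1 else 0)
  else
    Matrix.vecMulVec (fun a => if (a : ℕ) = (Joff n ((ℓ : ℕ) - n)).1 then (-1 : ℝ) else 0)
      (fun b => if (b : ℕ) = (Joff n ((ℓ : ℕ) - n)).2 then 1 else 0)

open Classical in
lemma Mfam_apply_lt {n r : ℕ} {ℓ : Fin r} (hℓ : (ℓ : ℕ) < n) (a b : Fin n) :
    Mfam n r ℓ a b = if ((a : ℕ) = (ℓ : ℕ) ∧ ((b : ℕ) = (ℓ : ℕ) ∨
      ∃ t, n + t < r ∧ Joff n t = ((ℓ : ℕ), (b : ℕ)))) then 1 else 0 := by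
  classical
  simp only [Mfam, if_pos hℓ, Matrix.vecMulVec_apply]
  by_cases hp : (a : ℕ) = (ℓ : ℕ) <;>
    by_cases hq : ((b : ℕ) = (ℓ : ℕ) ∨ ∃ t, n + t < r ∧ Joff n t = ((ℓ : ℕ), (b : ℕ))) <;>
    simp [hp, hq]

open Classical in
lemma Mfam_apply_ge {n r : ℕ} {ℓ : Fin r} (hℓ : ¬ (ℓ : ℕ) < n) (a b : Fin n) :
    Mfam n r ℓ a b = if ((a : ℕ) = (Joff n ((ℓ : ℕ) - n)).1 ∧
      (b : ℕ) = (Joff n ((ℓ : ℕ) - n)).2) then -1 else 0 := by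
  classical
  simp only [Mfam, if_neg hℓ, Matrix.vecMulVec_apply]
  by_cases hp : (a : ℕ) = (Joff n ((ℓ : ℕ) - n)).1 <;>
    by_cases hq : (b : ℕ) = (Joff n ((ℓ : ℕ) - n)).2 <;>
    simp [hp, hq]

theorem stmt9 (n r : ℕ) (hn : 1 ≤ n) (h1 : n ≤ r) (h2 : r ≤ n ^ 2 - n + 1) :
    ∃ M : Fin r → Matrix (Fin n) (Fin n) ℝ,
      LinearIndependent ℝ M ∧ (∀ ℓ, (M ℓ).rank = 1) ∧ ∑ ℓ, M ℓ = 1 := by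
  classical
  -- basic arithmetic
  have hmul : n * (n - 1) + n = n * n := by
    cases n with
    | zero => simp
    | succ m => simp [Nat.succ_sub_one]; ring
  have hbound : ∀ t : ℕ, n + t < r → t < n * (n-1) := by
    intro t ht
    have hsq : n ^ 2 = n * n := sq n
    rw [hsq] at h2
    omega
  refine ⟨Mfam n r, ?_, ?_, ?_⟩
  · -- linear independence
    rw [Fintype.linearIndependent_iff]
    intro g hg
    have key : ∀ a b : Fin n, ∑ i, g i * Mfam n r i a b = 0 := by
      intro a b
      have := congrFun (congrFun hg a) b
      simpa [Matrix.sum_apply, Matrix.smul_apply, smul_eq_mul] using this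
    have hdiag : ∀ m : Fin r, (m : ℕ) < n → g m = 0 := by
      intro m hm
      have hk := key ⟨(m : ℕ), hm⟩ ⟨(m : ℕ), hm⟩
      rw [Finset.sum_eq_single m] at hk
      · rw [Mfam_apply_lt hm] at hk
        simpa using hk
      · intro i _ hi
        by_cases hi' : (i : ℕ) < n
        · rw [Mfam_apply_lt hi']
          have : ¬ ((m : ℕ) = (i : ℕ)) := fun h => hi (Fin.ext h.symm)
          simp [this]
        · rw [Mfam_apply_ge hi']
          have hlt : (i : ℕ) - n < n * (n-1) := hbound _ (by omega)
          obtain ⟨_, _, hne⟩ := Joff_facts hlt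
          have : ¬ (((m:ℕ) = (Joff n ((i:ℕ) - n)).1) ∧ ((m:ℕ) = (Joff n ((i:ℕ) - n)).2)) := by
            rintro ⟨ha, hb⟩; exact hne (ha ▸ hb ▸ rfl)
          simp only [Fin.val_mk] at this ⊢
          rw [if_neg this, mul_zero]
      · intro h; exact absurd (Finset.mem_univ m) h
    intro ℓ
    by_cases hℓ : (ℓ : ℕ) < n
    · exact hdiag ℓ hℓ
    · set t0 := (ℓ : ℕ) - n with ht0
      have ht0r : n + t0 < r := by omega
      have hlt : t0 < n * (n-1) := hbound _ ht0r
      obtain ⟨hi, hj, hne⟩ := Joff_facts hlt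
      set i0 : Fin n := ⟨(Joff n t0).1, hi⟩
      set j0 : Fin n := ⟨(Joff n t0).2, hj⟩
      set m0 : Fin r := ⟨(Joff n t0).1, lt_of_lt_of_le hi h1⟩
      have hm0ℓ : m0 ≠ ℓ := by
        intro h
        have : (m0 : ℕ) = (ℓ : ℕ) := congrArg Fin.val h
        simp [m0] at this; omega
      have hk := key i0 j0
      have hzero : ∀ x ∈ Finset.univ, x ∉ ({m0, ℓ} : Finset (Fin r)) →
          g x * Mfam n r x i0 j0 = 0 := by
        intro x _ hx
        simp only [Finset.mem_insert, Finset.mem_singleton, not_or] at hx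
        obtain ⟨hxm, hxl⟩ := hx
        by_cases hx' : (x : ℕ) < n
        · rw [Mfam_apply_lt hx']
          have : ¬ ((i0 : ℕ) = (x : ℕ)) := by
            intro h
            apply hxm; apply Fin.ext; simp [m0]; omega
          rw [if_neg (fun hc => this hc.1), mul_zero]
        · rw [Mfam_apply_ge hx']
          have hltx : (x : ℕ) - n < n * (n-1) := hbound _ (by omega)
          have : ¬ (((i0:ℕ) = (Joff n ((x:ℕ) - n)).1) ∧ ((j0:ℕ) = (Joff n ((x:ℕ) - n)).2)) := by
            rintro ⟨ha, hb⟩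
            have heq : Joff n ((x:ℕ) - n) = Joff n t0 := by
              have h1' : (Joff n ((x:ℕ)-n)).1 = (Joff n t0).1 := by simp [i0] at ha; omega
              have h2' : (Joff n ((x:ℕ)-n)).2 = (Joff n t0).2 := by simp [j0] at hb; omega
              exact Prod.ext h1' h2'
            have := Joff_inj hltx hlt heq
            apply hxl; apply Fin.ext; omega
          rw [if_neg this, mul_zero]
      have hsum : ∑ x ∈ ({m0, ℓ} : Finset (Fin r)), g x * Mfam n r x i0 j0 = 0 := by
        rw [Finset.sum_subset (Finset.subset_univ _) hzero]; exact hk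
      rw [Finset.sum_pair hm0ℓ] at hsum
      have hterm1 : g m0 * Mfam n r m0 i0 j0 = 0 := by
        rw [hdiag m0 (by simp [m0]; exact hi), zero_mul]
      have hterm2 : Mfam n r ℓ i0 j0 = -1 := by
        rw [Mfam_apply_ge hℓ]
        rw [if_pos ⟨rfl, rfl⟩]
      rw [hterm1, hterm2, zero_add] at hsum
      linarith
  · -- rank one
    intro ℓ
    by_cases hℓ : (ℓ : ℕ) < n
    · rw [Mfam, if_pos hℓ]
      apply rank_vecMulVec_one
      · intro h
        have := congrFun h ⟨(ℓ : ℕ), hℓ⟩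
        simp at this
      · intro h
        have := congrFun h ⟨(ℓ : ℕ), hℓ⟩
        simp at this
    · have ht0r : n + ((ℓ : ℕ) - n) < r := by omega
      have hlt : (ℓ : ℕ) - n < n * (n-1) := by
        have hsq : n ^ 2 = n * n := sq n
        rw [hsq] at h2
        have := ℓ.2
        omega
      obtain ⟨hi, hj, _⟩ := Joff_facts hlt
      rw [Mfam, if_neg hℓ]
      apply rank_vecMulVec_one
      · intro h
        have := congrFun h ⟨(Joff n ((ℓ:ℕ)-n)).1, hi⟩
        simp at this
      · intro h
        have := congrFun h ⟨(Joff n ((ℓ:ℕ)-n)).2, hj⟩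
        simp at this
  · -- sum is identity
    ext a b
    rw [Matrix.sum_apply, Matrix.one_apply]
    have hbound' : ∀ t : ℕ, n + t < r → t < n * (n-1) := by
      intro t ht
      have hsq : n ^ 2 = n * n := sq n
      rw [hsq] at h2
      omega
    by_cases hab : a = b
    · subst hab
      rw [if_pos rfl]
      set a' : Fin r := ⟨(a : ℕ), lt_of_lt_of_le a.2 h1⟩
      rw [Finset.sum_eq_single a']
      · rw [Mfam_apply_lt (show ((a' : ℕ) < n) from a.2)]
        simp [a']
      · intro i _ hi
        by_cases hi' : (i : ℕ) < n
        · rw [Mfam_apply_lt hi']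
          have : ¬ ((a : ℕ) = (i : ℕ)) := by
            intro h; apply hi; apply Fin.ext; simp [a']; omega
          simp [this]
        · rw [Mfam_apply_ge hi']
          have hltx : (i : ℕ) - n < n * (n-1) := hbound' _ (by omega)
          obtain ⟨_, _, hne⟩ := Joff_facts hltx
          have : ¬ (((a:ℕ) = (Joff n ((i:ℕ) - n)).1) ∧ ((a:ℕ) = (Joff n ((i:ℕ) - n)).2)) := by
            rintro ⟨ha, hb⟩; exact hne (ha ▸ hb ▸ rfl)
          rw [if_neg this]
      · intro h; exact absurd (Finset.mem_univ a') h
    · rw [if_neg hab]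
      have hab' : (a : ℕ) ≠ (b : ℕ) := fun h => hab (Fin.ext h)
      by_cases hex : ∃ t, n + t < r ∧ Joff n t = ((a : ℕ), (b : ℕ))
      · obtain ⟨t0, ht0r, ht0⟩ := hex
        set a' : Fin r := ⟨(a : ℕ), lt_of_lt_of_le a.2 h1⟩
        set ℓ0 : Fin r := ⟨n + t0, ht0r⟩
        have hne0 : a' ≠ ℓ0 := by
          intro h
          have : (a' : ℕ) = (ℓ0 : ℕ) := congrArg Fin.val h
          simp [a', ℓ0] at this
          omega
        have hzero : ∀ x ∈ Finset.univ, x ∉ ({a', ℓ0} : Finset (Fin r)) →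
            Mfam n r x a b = 0 := by
          intro x _ hx
          simp only [Finset.mem_insert, Finset.mem_singleton, not_or] at hx
          obtain ⟨hxa, hxl⟩ := hx
          by_cases hx' : (x : ℕ) < n
          · rw [Mfam_apply_lt hx']
            have : ¬ ((a : ℕ) = (x : ℕ)) := by
              intro h; apply hxa; apply Fin.ext; simp [a']; omega
            simp [this]
          · rw [Mfam_apply_ge hx']
            have hltx : (x : ℕ) - n < n * (n-1) := hbound' _ (by omega)
            have hlt0 : t0 < n * (n-1) := hbound' _ ht0r
            have : ¬ (((a:ℕ) = (Joff n ((x:ℕ) - n)).1) ∧ ((b:ℕ) = (Joff n ((x:ℕ) - n)).2)) := by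
              rintro ⟨ha, hb⟩
              have heq : Joff n ((x:ℕ) - n) = Joff n t0 := by
                rw [ht0]; exact Prod.ext ha.symm hb.symm
              have := Joff_inj hltx hlt0 heq
              apply hxl; apply Fin.ext; simp [ℓ0]; omega
            rw [if_neg this]
        have hsum : ∑ x ∈ ({a', ℓ0} : Finset (Fin r)), Mfam n r x a b
            = ∑ x, Mfam n r x a b := Finset.sum_subset (Finset.subset_univ _) hzero
        rw [← hsum, Finset.sum_pair hne0]
        have h1' : Mfam n r a' a b = 1 := by
          rw [Mfam_apply_lt (show ((a' : ℕ) < n) from a.2)]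
          have : (a : ℕ) = (a' : ℕ) ∧ ((b : ℕ) = (a' : ℕ) ∨
              ∃ t, n + t < r ∧ Joff n t = ((a' : ℕ), (b : ℕ))) := by
            refine ⟨rfl, Or.inr ⟨t0, ht0r, ?_⟩⟩
            simpa [a'] using ht0
          rw [if_pos this]
        have h2' : Mfam n r ℓ0 a b = -1 := by
          rw [Mfam_apply_ge (show ¬ ((ℓ0 : ℕ) < n) by simp [ℓ0])]
          have hv : ((ℓ0 : ℕ) - n) = t0 := by simp [ℓ0]
          rw [if_pos (show _ by rw [hv, ht0]; exact ⟨rfl, rfl⟩)]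
        rw [h1', h2']
        ring
      · apply Finset.sum_eq_zero
        intro x _
        by_cases hx' : (x : ℕ) < n
        · rw [Mfam_apply_lt hx']
          rw [if_neg]
          rintro ⟨ha, hb | ⟨t, htr, htj⟩⟩
          · exact hab' (ha.symm ▸ hb.symm ▸ rfl)
          · exact hex ⟨t, htr, by rw [htj, ha]⟩
        · rw [Mfam_apply_ge hx']
          rw [if_neg]
          rintro ⟨ha, hb⟩
          exact hex ⟨(x : ℕ) - n, by omega, (Prod.ext ha.symm hb.symm)⟩
end
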